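/- arXiv:2512.14184 — 10 statements merged into one kernel-verified Lean document; each statement's English description precedes it below -/
import Mathlib

section
/- Let A, B, C ⊆ (0,1) be finite sets of reals with C = {c_1, …, c_n} indexed by i = 1,…,n. Define P = {100·i : 1 ≤ i ≤ n} ∪ {100·i + 3 - c_i : 1 ≤ i ≤ n} and Q = A ∪ {3 - b : b ∈ B}. Then there exist a ∈ A, b ∈ B, and an index i with a + b = c_i if and only if there exist p₁, p₂ ∈ P and q₁, q₂ ∈ Q with p₁ - p₂ = q₁ - q₂ and p₁ ≠ p₂. -/
/-!
Elements of `P` have the form `100 (i + 1) + e` with offset `e ∈ {0, 3 - cᵢ} ⊆ [0, 3]`, while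
elements of `Q` lie in `(0, 3)`. An equal difference is therefore smaller than `3` in absolute
value, which forces both points of `P` to share their index `i`; being distinct, their distance
is `3 - cᵢ > 2`. Two points of `A`, or two of `3 - B`, are less than `1` apart, so the points of
`Q` are some `a` and `3 - b`, at distance `3 - (a + b)`, whence `a + b = cᵢ`.
-/

open Set

theorem Nat.eq_of_abs_cast_sub_lt_one {R : Type*} [Ring R] [LinearOrder R] [IsStrictOrderedRing R]
    {i j : ℕ} (h : |(i : R) - j| < 1) : i = j := by
  by_contra hij
  have hint : (1 : ℤ) ≤ |(i : ℤ) - j| := Int.one_le_abs (sub_ne_zero.2 (by exact_mod_cast hij))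
  have : (1 : R) ≤ |(i : R) - j| := by exact_mod_cast hint
  exact (h.trans_le this).false

namespace ThreeSumReduction

variable {n : ℕ}

def setP (c : Fin n → ℝ) : Set ℝ :=
  (range fun i : Fin n => 100 * ((i : ℝ) + 1)) ∪
    (range fun i : Fin n => 100 * ((i : ℝ) + 1) + 3 - c i)

def setQ (A B : Finset ℝ) : Set ℝ := ↑A ∪ (fun b => 3 - b) '' ↑B

theorem eq_of_abs_sub_lt {i j : Fin n} {x y : ℝ} (hx : x ∈ Icc 0 3) (hy : y ∈ Icc 0 3)
    (h : |100 * ((i : ℝ) + 1) + x - (100 * ((j : ℝ) + 1) + y)| < 97) : i = j := by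
  have hxy : |x - y| ≤ 3 := abs_sub_le_iff.2 ⟨by linarith [hx.2, hy.1], by linarith [hx.1, hy.2]⟩
  have hij : |(i : ℝ) - j| < 1 := by
    have : |100 * ((i : ℝ) - j)| < 100 :=
      calc |100 * ((i : ℝ) - j)|
          = |(100 * ((i : ℝ) + 1) + x - (100 * ((j : ℝ) + 1) + y)) - (x - y)| := by ring_nf
        _ ≤ |100 * ((i : ℝ) + 1) + x - (100 * ((j : ℝ) + 1) + y)| + |x - y| := abs_sub _ _
        _ < 100 := by linarith
    rw [abs_mul, abs_of_pos (by norm_num : (0 : ℝ) < 100)] at this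
    linarith
  exact Fin.ext (Nat.eq_of_abs_cast_sub_lt_one hij)

theorem exists_eq_add_of_mem_setP {c : Fin n → ℝ} {p : ℝ} (hp : p ∈ setP c) :
    ∃ i, ∃ e ∈ ({0, 3 - c i} : Set ℝ), p = 100 * ((i : ℝ) + 1) + e := by
  rcases hp with ⟨i, rfl⟩ | ⟨i, rfl⟩
  · exact ⟨i, 0, Or.inl rfl, (add_zero _).symm⟩
  · exact ⟨i, 3 - c i, Or.inr rfl, add_sub_assoc _ _ _⟩

theorem exists_abs_sub_eq_of_mem_setP {c : Fin n → ℝ} (hc : ∀ i, c i ∈ Icc 0 3)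
    {p₁ p₂ : ℝ} (hp₁ : p₁ ∈ setP c) (hp₂ : p₂ ∈ setP c) (hne : p₁ ≠ p₂)
    (hlt : |p₁ - p₂| < 97) : ∃ i, |p₁ - p₂| = 3 - c i := by
  have hgap : ∀ i, 0 ≤ 3 - c i := fun i => by linarith [(hc i).2]
  have hoff : ∀ i, ∀ e ∈ ({0, 3 - c i} : Set ℝ), e ∈ Icc 0 3 := by
    rintro i e (rfl | rfl)
    · exact ⟨le_rfl, by norm_num⟩
    · exact ⟨hgap i, by linarith [(hc i).1]⟩
  obtain ⟨i, e, he, rfl⟩ := exists_eq_add_of_mem_setP hp₁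
  obtain ⟨j, f, hf, rfl⟩ := exists_eq_add_of_mem_setP hp₂
  obtain rfl := eq_of_abs_sub_lt (hoff i e he) (hoff j f hf) hlt
  refine ⟨i, ?_⟩
  rw [add_sub_add_left_eq_sub]
  rcases he with rfl | rfl <;> rcases hf with rfl | rfl
  · exact absurd rfl hne
  · rw [zero_sub, abs_neg, abs_of_nonneg (hgap i)]
  · rw [sub_zero, abs_of_nonneg (hgap i)]
  · exact absurd rfl hne

variable {A B : Finset ℝ}

theorem mem_Ioo_of_mem_setQ (hA : ∀ a ∈ A, a ∈ Ioo (0 : ℝ) 1)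
    (hB : ∀ b ∈ B, b ∈ Ioo (0 : ℝ) 1) {q : ℝ} (hq : q ∈ setQ A B) : q ∈ Ioo 0 3 := by
  rcases hq with ha | ⟨b, hb, rfl⟩
  · exact ⟨(hA q ha).1, by linarith [(hA q ha).2]⟩
  · exact ⟨by linarith [(hB b hb).2], by linarith [(hB b hb).1]⟩

theorem abs_sub_lt_three_of_mem_setQ (hA : ∀ a ∈ A, a ∈ Ioo (0 : ℝ) 1)
    (hB : ∀ b ∈ B, b ∈ Ioo (0 : ℝ) 1) {q₁ q₂ : ℝ} (hq₁ : q₁ ∈ setQ A B) (hq₂ : q₂ ∈ setQ A B) :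
    |q₁ - q₂| < 3 :=
  have h₁ := mem_Ioo_of_mem_setQ hA hB hq₁
  have h₂ := mem_Ioo_of_mem_setQ hA hB hq₂
  abs_sub_lt_of_nonneg_of_lt h₁.1.le h₁.2 h₂.1.le h₂.2

theorem exists_add_eq_of_abs_sub_eq (hA : ∀ a ∈ A, a ∈ Ioo (0 : ℝ) 1)
    (hB : ∀ b ∈ B, b ∈ Ioo (0 : ℝ) 1) {q₁ q₂ c : ℝ} (hq₁ : q₁ ∈ setQ A B) (hq₂ : q₂ ∈ setQ A B)
    (hc : c ≤ 2) (h : |q₁ - q₂| = 3 - c) : ∃ a ∈ A, ∃ b ∈ B, a + b = c := by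
  rcases hq₁ with ha₁ | ⟨b₁, hb₁, rfl⟩ <;> rcases hq₂ with ha₂ | ⟨b₂, hb₂, rfl⟩
  · have hclose : |q₁ - q₂| < 1 := abs_sub_lt_of_nonneg_of_lt
      (hA q₁ ha₁).1.le (hA q₁ ha₁).2 (hA q₂ ha₂).1.le (hA q₂ ha₂).2
    linarith
  · refine ⟨q₁, ha₁, b₂, hb₂, ?_⟩
    rw [abs_of_neg (by linarith [(hA q₁ ha₁).2, (hB b₂ hb₂).2])] at h
    linarith
  · refine ⟨q₂, ha₂, b₁, hb₁, ?_⟩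
    rw [abs_of_pos (by linarith [(hA q₂ ha₂).2, (hB b₁ hb₁).2])] at h
    linarith
  · have hclose : |b₂ - b₁| < 1 := abs_sub_lt_of_nonneg_of_lt
      (hB b₂ hb₂).1.le (hB b₂ hb₂).2 (hB b₁ hb₁).1.le (hB b₁ hb₁).2
    rw [sub_sub_sub_cancel_left] at h
    linarith

end ThreeSumReduction

open ThreeSumReduction in
/-- Correctness of the reduction from 3SUM' to EqDist. -/
theorem threeSum'_iff_eqDist (n : ℕ) (A B : Finset ℝ) (c : Fin n → ℝ)
    (hA : ∀ a ∈ A, a ∈ Set.Ioo (0 : ℝ) 1) (hB : ∀ b ∈ B, b ∈ Set.Ioo (0 : ℝ) 1)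
    (hc : ∀ i, c i ∈ Set.Ioo (0 : ℝ) 1)
    (P : Set ℝ)
    (hP : P = (Set.range fun i : Fin n => 100 * ((i : ℝ) + 1)) ∪
              (Set.range fun i : Fin n => 100 * ((i : ℝ) + 1) + 3 - c i))
    (Q : Set ℝ) (hQ : Q = ↑A ∪ (fun b => 3 - b) '' ↑B) :
    (∃ a ∈ A, ∃ b ∈ B, ∃ i, a + b = c i) ↔
    (∃ p₁ ∈ P, ∃ p₂ ∈ P, ∃ q₁ ∈ Q, ∃ q₂ ∈ Q, p₁ - p₂ = q₁ - q₂ ∧ p₁ ≠ p₂) := by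
  change P = setP c at hP
  change Q = setQ A B at hQ
  subst hP hQ
  constructor
  · rintro ⟨a, ha, b, hb, i, hab⟩
    refine ⟨100 * ((i : ℝ) + 1) + 3 - c i, Or.inr ⟨i, rfl⟩, 100 * ((i : ℝ) + 1), Or.inl ⟨i, rfl⟩,
      3 - b, Or.inr ⟨b, hb, rfl⟩, a, Or.inl ha, by linarith, ?_⟩
    linarith [(hc i).2]
  · rintro ⟨p₁, hp₁, p₂, hp₂, q₁, hq₁, q₂, hq₂, hpq, hne⟩
    have hq := abs_sub_lt_three_of_mem_setQ hA hB hq₁ hq₂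
    obtain ⟨i, hi⟩ := exists_abs_sub_eq_of_mem_setP
      (fun i => Ioo_subset_Icc_self.trans (Icc_subset_Icc le_rfl (by norm_num)) (hc i))
      hp₁ hp₂ hne (by rw [hpq]; linarith)
    obtain ⟨a, ha, b, hb, hab⟩ :=
      exists_add_eq_of_abs_sub_eq hA hB hq₁ hq₂ (by linarith [(hc i).2]) (hpq ▸ hi)
    exact ⟨a, ha, b, hb, i, hab⟩
end

section
/- Let P be a finite set of reals and Q a finite union of closed intervals on the real line, all contained in [0,1], whose endpoints (and the elements of P) are rationals with denominators at most M. If u realizes the minimum over all translations v ∈ ℝ of max_{p ∈ P} dist(p + v, Q), and this minimum is positive, then this minimum is at least 1/(2·M⁴). -/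
/-- `x` is a rational with (positive) denominator at most `M`. -/
def RatBounded (M : ℕ) (x : ℝ) : Prop :=
  ∃ a b : ℤ, 1 ≤ b ∧ b ≤ (M : ℤ) ∧ x = (a : ℝ) / (b : ℝ)

/-! At an optimal translation `u` with value `f > 0`, some point `p₁ + u` has a nearest point
of `Q` at distance `f` on its left and some `p₂ + u` one on its right: otherwise a small shift of
`u` towards the nearest points would lower every extremal distance. A nearest point at positive
distance is an endpoint of its interval, so `2 f = p₁ - p₂ - b₁ + a₂` for endpoints `b₁`, `a₂`
of `Q`: a nonzero rational with denominator at most `M⁴`. -/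

open Metric Set Filter Topology Pointwise

namespace RatBounded

variable {M N : ℕ} {x y : ℝ}

lemma neg (hx : RatBounded M x) : RatBounded M (-x) := by
  obtain ⟨a, b, hb₁, hbM, rfl⟩ := hx
  exact ⟨-a, b, hb₁, hbM, by push_cast; ring⟩

lemma add (hx : RatBounded M x) (hy : RatBounded N y) : RatBounded (M * N) (x + y) := by
  obtain ⟨a, b, hb₁, hbM, rfl⟩ := hx
  obtain ⟨c, d, hd₁, hdN, rfl⟩ := hy
  refine ⟨a * d + c * b, b * d, one_le_mul_of_one_le_of_one_le hb₁ hd₁, ?_, ?_⟩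
  · push_cast
    exact mul_le_mul hbM hdN (by positivity) (by positivity)
  · have hb : (b : ℝ) ≠ 0 := by positivity
    have hd : (d : ℝ) ≠ 0 := by positivity
    push_cast
    field_simp

lemma sub (hx : RatBounded M x) (hy : RatBounded N y) : RatBounded (M * N) (x - y) := by
  simpa only [sub_eq_add_neg] using hx.add hy.neg

lemma inv_le_abs (hx : RatBounded M x) (hx₀ : x ≠ 0) : (M : ℝ)⁻¹ ≤ |x| := by
  obtain ⟨a, b, hb₁, hbM, rfl⟩ := hx
  have ha : 1 ≤ |(a : ℝ)| := by
    have : a ≠ 0 := by rintro rfl; simp at hx₀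
    exact_mod_cast Int.one_le_abs this
  have hb : (0 : ℝ) < b := by exact_mod_cast hb₁
  have hbM' : (b : ℝ) ≤ M := by exact_mod_cast hbM
  rw [abs_div, abs_of_pos hb]
  calc (M : ℝ)⁻¹ ≤ (b : ℝ)⁻¹ := inv_anti₀ hb hbM'
    _ = 1 / b := (one_div _).symm
    _ ≤ |(a : ℝ)| / b := div_le_div_of_nonneg_right ha hb.le

end RatBounded

lemma infDist_neg_neg (x : ℝ) (Q : Set ℝ) : infDist (-x) (-Q) = infDist x Q := by
  rw [← image_neg_eq_neg, infDist_image isometry_neg]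

lemma eventually_infDist_add_lt {Q : Set ℝ} {x q : ℝ} (hq : q ∈ Q) (hxq : x < q) :
    ∀ᶠ ε in 𝓝[>] 0, infDist (x + ε) Q < q - x := by
  filter_upwards [Ioo_mem_nhdsGT (by linarith : (0 : ℝ) < 2 * (q - x))] with ε ⟨hε₀, hε⟩
  calc infDist (x + ε) Q ≤ dist (x + ε) q := infDist_le_dist_of_mem hq
    _ = |x + ε - q| := Real.dist_eq _ _
    _ < q - x := abs_lt.2 ⟨by linarith, by linarith⟩

lemma eq_right_of_infDist_eq_sub {Q : Set ℝ} {a b q x : ℝ} (hab : Icc a b ⊆ Q)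
    (hq : q ∈ Icc a b) (hqx : q < x) (hd : infDist x Q = x - q) : q = b := by
  by_contra hne
  have hqb : q < b := lt_of_le_of_ne hq.2 hne
  have hmem : min b x ∈ Q := hab ⟨hq.1.trans (le_min hq.2 hqx.le), min_le_left b x⟩
  have : infDist x Q ≤ x - min b x :=
    calc infDist x Q ≤ dist x (min b x) := infDist_le_dist_of_mem hmem
      _ = x - min b x := by rw [Real.dist_eq, abs_of_nonneg (sub_nonneg.2 (min_le_right b x))]
  linarith [lt_min hqb hqx]

lemma eq_left_of_infDist_eq_sub {Q : Set ℝ} {a b q x : ℝ} (hab : Icc a b ⊆ Q)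
    (hq : q ∈ Icc a b) (hxq : x < q) (hd : infDist x Q = q - x) : q = a := by
  have hab' : Icc (-b) (-a) ⊆ -Q := by rw [← neg_Icc]; exact neg_subset_neg.2 hab
  have hq' : -q ∈ Icc (-b) (-a) := by rw [← neg_Icc]; exact neg_mem_neg.2 hq
  have hd' : infDist (-x) (-Q) = -x - -q := by rw [infDist_neg_neg, hd]; ring
  exact neg_inj.1 (eq_right_of_infDist_eq_sub hab' hq' (neg_lt_neg hxq) hd')

/-- The directed Hausdorff distance `d'_H(P + v, Q)`, for the point set `P = p '' s`. -/
noncomputable def translateHausdorff {ι : Type*} (s : Finset ι) (hs : s.Nonempty) (p : ι → ℝ)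
    (Q : Set ℝ) (v : ℝ) : ℝ :=
  s.sup' hs fun i => infDist (p i + v) Q

section translateHausdorff

variable {ι : Type*} {s : Finset ι} {hs : s.Nonempty} {p : ι → ℝ} {Q : Set ℝ} {u : ℝ}

lemma translateHausdorff_neg (v : ℝ) :
    translateHausdorff s hs (-p) (-Q) (-v) = translateHausdorff s hs p Q v := by
  simp only [translateHausdorff, Pi.neg_apply, ← neg_add, infDist_neg_neg]

lemma infDist_le_translateHausdorff {i : ι} (hi : i ∈ s) (v : ℝ) :
    infDist (p i + v) Q ≤ translateHausdorff s hs p Q v :=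
  Finset.le_sup' (fun i => infDist (p i + v) Q) hi

lemma exists_sub_mem_of_isMinOn (hQ : IsClosed Q)
    (hu : IsMinOn (translateHausdorff s hs p Q) univ u)
    (hpos : 0 < translateHausdorff s hs p Q u) :
    ∃ i ∈ s, p i + u - translateHausdorff s hs p Q u ∈ Q ∧
      infDist (p i + u) Q = translateHausdorff s hs p Q u := by
  set f := translateHausdorff s hs p Q u
  by_contra! hno_left
  have hshift : ∀ i ∈ s, ∀ᶠ ε in 𝓝[>] 0, infDist (p i + (u + ε)) Q < f := by
    intro i hi
    rcases (infDist_le_translateHausdorff (Q := Q) hi u).lt_or_eq with hlt | heq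
    · have hcont : Tendsto (fun ε => infDist (p i + (u + ε)) Q) (𝓝 0)
            (𝓝 (infDist (p i + u) Q)) :=
        ((continuous_infDist_pt Q).comp
          (continuous_const.add (continuous_const.add continuous_id))).tendsto' 0 _ (by simp)
      exact nhdsWithin_le_nhds (hcont.eventually (gt_mem_nhds hlt))
    · have hQne : Q.Nonempty := nonempty_iff_ne_empty.2 fun h => by
        have : infDist (p i + u) Q = 0 := by rw [h, infDist_empty]
        linarith
      obtain ⟨q, hqQ, hq⟩ := hQ.exists_infDist_eq_dist hQne (p i + u)
      have hdist : |p i + u - q| = f := by rw [← Real.dist_eq, ← hq, heq]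
      have hq_right : q = p i + u + f := by
        rcases (abs_eq hpos.le).1 hdist with h | h
        · exact absurd heq (hno_left i hi (by rwa [show p i + u - f = q by linarith]))
        · linarith
      filter_upwards [eventually_infDist_add_lt hqQ (by linarith : p i + u < q)] with ε hε
      rw [← add_assoc]; linarith
  obtain ⟨ε, hε⟩ := ((Filter.eventually_all_finset s).2 hshift).exists
  exact (isMinOn_univ_iff.1 hu (u + ε)).not_gt ((Finset.sup'_lt_iff hs).2 hε)

lemma exists_add_mem_of_isMinOn (hQ : IsClosed Q)
    (hu : IsMinOn (translateHausdorff s hs p Q) univ u)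
    (hpos : 0 < translateHausdorff s hs p Q u) :
    ∃ i ∈ s, p i + u + translateHausdorff s hs p Q u ∈ Q ∧
      infDist (p i + u) Q = translateHausdorff s hs p Q u := by
  have hu' : IsMinOn (translateHausdorff s hs (-p) (-Q)) univ (-u) := by
    refine isMinOn_univ_iff.2 fun v => ?_
    rw [← neg_neg v, translateHausdorff_neg, translateHausdorff_neg]
    exact isMinOn_univ_iff.1 hu (-v)
  obtain ⟨i, hi, hmem, hd⟩ := exists_sub_mem_of_isMinOn hQ.neg hu'
    (by rwa [translateHausdorff_neg])
  simp only [translateHausdorff_neg, Pi.neg_apply, ← neg_add, infDist_neg_neg, Set.mem_neg]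
    at hmem hd
  exact ⟨i, hi, by convert hmem using 1; ring, hd⟩

end translateHausdorff

theorem oneSidedHausdorff_separation_general (M : ℕ)
    (P : Finset ℝ) (hPne : P.Nonempty)
    (s : Finset (ℝ × ℝ)) (Q : Set ℝ)
    (hQdef : Q = ⋃ pq ∈ s, Set.Icc pq.1 pq.2)
    (hPrat : ∀ p ∈ P, RatBounded M p)
    (hsrat : ∀ pq ∈ s, RatBounded M pq.1 ∧ RatBounded M pq.2)
    (u : ℝ)
    (hu : ∀ v : ℝ, P.sup' hPne (fun p => Metric.infDist (p + u) Q) ≤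
                   P.sup' hPne (fun p => Metric.infDist (p + v) Q))
    (hpos : 0 < P.sup' hPne (fun p => Metric.infDist (p + u) Q)) :
    1 / (2 * (M : ℝ) ^ 4) ≤ P.sup' hPne (fun p => Metric.infDist (p + u) Q) := by
  have hopt : IsMinOn (translateHausdorff P hPne id Q) univ u := isMinOn_univ_iff.2 hu
  change 0 < translateHausdorff P hPne id Q u at hpos
  change 1 / (2 * (M : ℝ) ^ 4) ≤ translateHausdorff P hPne id Q u
  have hQ : IsClosed Q := hQdef ▸ isClosed_biUnion_finset fun _ _ => isClosed_Icc
  obtain ⟨p₁, hp₁, hq₁, hd₁⟩ := exists_sub_mem_of_isMinOn hQ hopt hpos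
  obtain ⟨p₂, hp₂, hq₂, hd₂⟩ := exists_add_mem_of_isMinOn hQ hopt hpos
  simp only [id] at hq₁ hd₁ hq₂ hd₂
  set f := translateHausdorff P hPne id Q u
  have hsub : ∀ pq ∈ s, Icc pq.1 pq.2 ⊆ Q := fun pq hpq =>
    hQdef ▸ subset_iUnion₂_of_subset pq hpq subset_rfl
  rw [hQdef, mem_iUnion₂] at hq₁ hq₂
  obtain ⟨I₁, hI₁, hq₁I⟩ := hq₁
  obtain ⟨I₂, hI₂, hq₂I⟩ := hq₂
  have hright : p₁ + u - f = I₁.2 :=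
    eq_right_of_infDist_eq_sub (x := p₁ + u) (hsub I₁ hI₁) hq₁I (by linarith)
      (by rw [hd₁]; ring)
  have hleft : p₂ + u + f = I₂.1 :=
    eq_left_of_infDist_eq_sub (x := p₂ + u) (hsub I₂ hI₂) hq₂I (by linarith)
      (by rw [hd₂]; ring)
  have hrat : RatBounded (M * M * M * M) (p₁ - p₂ - I₁.2 + I₂.1) :=
    (((hPrat p₁ hp₁).sub (hPrat p₂ hp₂)).sub (hsrat I₁ hI₁).2).add (hsrat I₂ hI₂).1
  have h2f : p₁ - p₂ - I₁.2 + I₂.1 = 2 * f := by linarith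
  have hsep := hrat.inv_le_abs (by rw [h2f]; linarith)
  rw [h2f, abs_of_pos (by linarith)] at hsep
  push_cast at hsep
  calc 1 / (2 * (M : ℝ) ^ 4) = ((M : ℝ) * M * M * M)⁻¹ / 2 := by ring
    _ ≤ f := by linarith

/-- Solution-separation for the one-sided Hausdorff distance under translation:
if the optimum is positive, it is at least 1/(2 M⁴). -/
theorem oneSidedHausdorff_separation (M : ℕ) (hM : 1 ≤ M)
    (P : Finset ℝ) (hPne : P.Nonempty)
    (s : Finset (ℝ × ℝ)) (Q : Set ℝ)
    (hQdef : Q = ⋃ pq ∈ s, Set.Icc pq.1 pq.2) (hQne : Q.Nonempty)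
    (hP01 : ∀ p ∈ P, p ∈ Set.Icc (0 : ℝ) 1) (hQ01 : Q ⊆ Set.Icc 0 1)
    (hPrat : ∀ p ∈ P, RatBounded M p)
    (hsrat : ∀ pq ∈ s, RatBounded M pq.1 ∧ RatBounded M pq.2)
    (u : ℝ)
    (hu : ∀ v : ℝ, P.sup' hPne (fun p => Metric.infDist (p + u) Q) ≤
                   P.sup' hPne (fun p => Metric.infDist (p + v) Q))
    (hpos : 0 < P.sup' hPne (fun p => Metric.infDist (p + u) Q)) :
    1 / (2 * (M : ℝ) ^ 4) ≤ P.sup' hPne (fun p => Metric.infDist (p + u) Q) :=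
  oneSidedHausdorff_separation_general M P hPne s Q hQdef hPrat hsrat u hu hpos
end

section
/- Let A, B be nonempty finite unions of closed intervals in ℝ, I(S) = [min S, max S], and COMB(S) = (S × [0,1]) ∪ (I(S) × [-1,0]). Then for any u ∈ ℝ: COMB(A) + (u,0) ⊆ COMB(B) if and only if A + u ⊆ B. -/
/-!
The upper teeth `S × [0, 1]` of a comb are the only part of it above height `0`, so the
points `(a, 1)` of `COMB A` detect `A + u ⊆ B`. Conversely, `A + u ⊆ B` with `A` nonempty and
`B` bounded gives `sInf B ≤ sInf A + u` and `sSup A + u ≤ sSup B`, so the translated handle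
`I(A) × [-1, 0]` also lies in the handle of `COMB B`.
-/

/-- The comb polygon of a set S ⊆ ℝ. -/
def COMB (S : Set ℝ) : Set (ℝ × ℝ) :=
  S ×ˢ Set.Icc (0 : ℝ) 1 ∪ Set.Icc (sInf S) (sSup S) ×ˢ Set.Icc (-1 : ℝ) 0

section TranslateBounds

variable {α : Type*} [ConditionallyCompleteLattice α] [AddCommGroup α] [IsOrderedAddMonoid α]
  {A B : Set α} {u : α}

theorem csInf_le_csInf_add (hA : A.Nonempty) (hB : BddBelow B) (h : (· + u) '' A ⊆ B) :
    sInf B ≤ sInf A + u :=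
  sub_le_iff_le_add.mp <|
    le_csInf hA fun a ha => sub_le_iff_le_add.mpr <| csInf_le hB (h ⟨a, ha, rfl⟩)

theorem csSup_add_le_csSup (hA : A.Nonempty) (hB : BddAbove B) (h : (· + u) '' A ⊆ B) :
    sSup A + u ≤ sSup B :=
  le_sub_iff_add_le.mp <|
    csSup_le hA fun a ha => le_sub_iff_add_le.mpr <| le_csSup hB (h ⟨a, ha, rfl⟩)

end TranslateBounds

theorem image_add_subset_of_image_add_COMB_subset {A B : Set ℝ} {u : ℝ}
    (h : (· + ((u, 0) : ℝ × ℝ)) '' COMB A ⊆ COMB B) : (· + u) '' A ⊆ B := by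
  rintro _ ⟨a, ha, rfl⟩
  rcases h ⟨(a, 1), Or.inl ⟨ha, by norm_num⟩, rfl⟩ with ⟨hb, -⟩ | ⟨-, hy⟩
  · exact hb
  · norm_num at hy

theorem image_add_COMB_subset {A B : Set ℝ} {u : ℝ} (h : (· + u) '' A ⊆ B)
    (hInf : sInf B ≤ sInf A + u) (hSup : sSup A + u ≤ sSup B) :
    (· + ((u, 0) : ℝ × ℝ)) '' COMB A ⊆ COMB B := by
  rintro _ ⟨⟨x, y⟩, ⟨hx, hy⟩ | ⟨hx, hy⟩, rfl⟩
  · exact Or.inl ⟨h ⟨x, hx, rfl⟩, by simpa using hy⟩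
  · refine Or.inr ⟨⟨?_, ?_⟩, by simpa using hy⟩
    · exact hInf.trans (add_le_add_left hx.1 u)
    · exact (add_le_add_left hx.2 u).trans hSup

theorem comb_containment_horizontal_general (A B : Set ℝ)
    (hAne : A.Nonempty)
    (hB : ∃ t : Finset (ℝ × ℝ), B = ⋃ pq ∈ t, Set.Icc pq.1 pq.2)
    (u : ℝ) :
    (fun x => x + ((u, 0) : ℝ × ℝ)) '' COMB A ⊆ COMB B ↔
    (fun a => a + u) '' A ⊆ B := by
  obtain ⟨t, rfl⟩ := hB
  have hBelow : BddBelow (⋃ pq ∈ t, Set.Icc pq.1 pq.2) :=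
    t.finite_toSet.bddBelow_biUnion.2 fun _ _ => bddBelow_Icc
  have hAbove : BddAbove (⋃ pq ∈ t, Set.Icc pq.1 pq.2) :=
    t.finite_toSet.bddAbove_biUnion.2 fun _ _ => bddAbove_Icc
  exact ⟨image_add_subset_of_image_add_COMB_subset, fun h =>
    image_add_COMB_subset h (csInf_le_csInf_add hAne hBelow h) (csSup_add_le_csSup hAne hAbove h)⟩

/-- A horizontal translate of COMB(A) is contained in COMB(B) iff the
corresponding translate of A is contained in B. -/
theorem comb_containment_horizontal (A B : Set ℝ)
    (hAne : A.Nonempty) (hBne : B.Nonempty)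
    (hA : ∃ s : Finset (ℝ × ℝ), A = ⋃ pq ∈ s, Set.Icc pq.1 pq.2)
    (hB : ∃ t : Finset (ℝ × ℝ), B = ⋃ pq ∈ t, Set.Icc pq.1 pq.2)
    (u : ℝ) :
    (fun x => x + ((u, 0) : ℝ × ℝ)) '' COMB A ⊆ COMB B ↔
    (fun a => a + u) '' A ⊆ B :=
  comb_containment_horizontal_general A B hAne hB u
end

section
/- Let A, B be nonempty finite unions of closed intervals in ℝ, and COMB(S) = (S × [0,1]) ∪ ([min S, max S] × [-1,0]). Then there exists (u,v) ∈ ℝ² with COMB(A) + (u,v) ⊆ COMB(B) if and only if there exists u ∈ ℝ with A + u ⊆ B. -/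
/-!
The teeth `S × [0,1]` of a comb reach height `1`, its base `[min S, max S] × [-1,0]` reaches
height `-1`, and both combs have total height `2`; so a translate of `COMB A` inside `COMB B`
cannot move vertically. At height `1` only the teeth of `COMB B` are present, so the teeth of
`COMB A` must land in them, which is `A + u ⊆ B`. Conversely, `A + u ⊆ B` puts `[min A, max A] + u`
inside `[min B, max B]`, so the base follows the teeth.
-/

open Set

lemma isBounded_biUnion_Icc (s : Finset (ℝ × ℝ)) :
    Bornology.IsBounded (⋃ pq ∈ s, Icc pq.1 pq.2) :=
  (Bornology.isBounded_biUnion_finset s).2 fun _ _ => Metric.isBounded_Icc _ _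

section Comb

variable {S A B : Set ℝ} {x y : ℝ} {p : ℝ × ℝ}

lemma mem_comb_of_mem (hx : x ∈ S) (hy : y ∈ Icc (0 : ℝ) 1) : (x, y) ∈ COMB S :=
  Or.inl ⟨hx, hy⟩

lemma mem_comb_of_mem_Icc (hx : x ∈ Icc (sInf S) (sSup S)) (hy : y ∈ Icc (-1 : ℝ) 0) :
    (x, y) ∈ COMB S :=
  Or.inr ⟨hx, hy⟩

lemma snd_mem_Icc_of_mem_comb (hp : p ∈ COMB S) : p.2 ∈ Icc (-1 : ℝ) 1 := by
  rcases hp with ⟨-, h0, h1⟩ | ⟨-, h0, h1⟩ <;> constructor <;> linarith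

lemma fst_mem_of_mem_comb (hp : p ∈ COMB S) (hpos : 0 < p.2) : p.1 ∈ S := by
  rcases hp with ⟨hS, -⟩ | ⟨-, -, hneg⟩
  · exact hS
  · exact absurd hpos hneg.not_gt

lemma snd_eq_zero_of_image_add_subset_comb {T : ℝ × ℝ} (hA : A.Nonempty) (hAbelow : BddBelow A)
    (hAabove : BddAbove A) (hT : (fun p => p + T) '' COMB A ⊆ COMB B) : T.2 = 0 := by
  obtain ⟨a, ha⟩ := hA
  have htop := snd_mem_Icc_of_mem_comb
    (hT (mem_image_of_mem _ (mem_comb_of_mem (y := 1) ha ⟨zero_le_one, le_rfl⟩)))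
  have hbot := snd_mem_Icc_of_mem_comb
    (hT (mem_image_of_mem _ (mem_comb_of_mem_Icc (y := -1) ⟨csInf_le hAbelow ha, le_csSup hAabove ha⟩
      ⟨le_rfl, by norm_num⟩)))
  simp only [Prod.snd_add, mem_Icc] at htop hbot
  linarith [htop.2, hbot.1]

lemma image_add_subset_of_image_add_subset_comb {T : ℝ × ℝ} (hT2 : T.2 = 0)
    (hT : (fun p => p + T) '' COMB A ⊆ COMB B) : (fun a => a + T.1) '' A ⊆ B := by
  rintro _ ⟨a, ha, rfl⟩
  exact fst_mem_of_mem_comb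
    (hT (mem_image_of_mem _ (mem_comb_of_mem (y := 1) ha ⟨zero_le_one, le_rfl⟩)))
    (by simp [hT2])

lemma image_add_subset_comb {u : ℝ} (hA : A.Nonempty) (hBbelow : BddBelow B) (hBabove : BddAbove B)
    (hu : (fun a => a + u) '' A ⊆ B) : (fun p => p + (u, 0)) '' COMB A ⊆ COMB B := by
  have hinf : sInf B - u ≤ sInf A :=
    le_csInf hA fun a ha => sub_le_iff_le_add.2 (csInf_le hBbelow (hu (mem_image_of_mem _ ha)))
  have hsup : sSup A ≤ sSup B - u :=
    csSup_le hA fun a ha => le_sub_iff_add_le.2 (le_csSup hBabove (hu (mem_image_of_mem _ ha)))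
  rintro _ ⟨⟨x, y⟩, ⟨hx, hy⟩ | ⟨hx, hy⟩, rfl⟩
  · exact mem_comb_of_mem (hu (mem_image_of_mem _ hx)) (by simpa using hy)
  · exact mem_comb_of_mem_Icc ⟨by linarith [hx.1], by linarith [hx.2]⟩ (by simpa using hy)

end Comb

theorem comb_containment_iff_general (A B : Set ℝ)
    (hAne : A.Nonempty)
    (hA : ∃ s : Finset (ℝ × ℝ), A = ⋃ pq ∈ s, Set.Icc pq.1 pq.2)
    (hB : ∃ t : Finset (ℝ × ℝ), B = ⋃ pq ∈ t, Set.Icc pq.1 pq.2) :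
    (∃ T : ℝ × ℝ, (fun x => x + T) '' COMB A ⊆ COMB B) ↔
    (∃ u : ℝ, (fun a => a + u) '' A ⊆ B) := by
  obtain ⟨s, rfl⟩ := hA
  obtain ⟨t, rfl⟩ := hB
  have hAb := isBounded_biUnion_Icc s
  have hBb := isBounded_biUnion_Icc t
  constructor
  · rintro ⟨T, hT⟩
    have hT2 := snd_eq_zero_of_image_add_subset_comb hAne hAb.bddBelow hAb.bddAbove hT
    exact ⟨T.1, image_add_subset_of_image_add_subset_comb hT2 hT⟩
  · rintro ⟨u, hu⟩
    exact ⟨(u, 0), image_add_subset_comb hAne hBb.bddBelow hBb.bddAbove hu⟩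

/-- Full correctness of the reduction from SegContPnt to polygon containment
under translation: some translate of COMB(A) lies in COMB(B) iff some
translate of A lies in B. -/
theorem comb_containment_iff (A B : Set ℝ)
    (hAne : A.Nonempty) (hBne : B.Nonempty)
    (hA : ∃ s : Finset (ℝ × ℝ), A = ⋃ pq ∈ s, Set.Icc pq.1 pq.2)
    (hB : ∃ t : Finset (ℝ × ℝ), B = ⋃ pq ∈ t, Set.Icc pq.1 pq.2) :
    (∃ T : ℝ × ℝ, (fun x => x + T) '' COMB A ⊆ COMB B) ↔
    (∃ u : ℝ, (fun a => a + u) '' A ⊆ B) :=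
  comb_containment_iff_general A B hAne hA hB
end

section
/- Let A' and B' be finite nonempty unions of closed intervals contained in [0.45, 0.55], let A = {0.1} ∪ A' ∪ {0.9} and B = [0, 0.2] ∪ B' ∪ [0.8, 1]. Then for every v ∈ ℝ: A + v ⊆ B if and only if A' + v ⊆ B'. -/
/-! Both sides of the equivalence force `|v| ≤ 0.1`. On the left, the padded set lies in `[0, 1]`,
so the anchors `0.1 + v` and `0.9 + v` pin `v` down; on the right, one point of `A'` and its
translate both lie in `[0.45, 0.55]`. Once `|v| ≤ 0.1`, the anchors land in the anchor intervals,
and `A' + v ⊆ [0.35, 0.65]` misses both anchor intervals, so it is covered by the padded set iff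
it is covered by `B'`. -/

open Set

def anchorPad (B : Set ℝ) : Set ℝ := Icc 0 0.2 ∪ B ∪ Icc 0.8 1

lemma anchorPad_subset_Icc {B : Set ℝ} (hB : B ⊆ Icc 0 1) : anchorPad B ⊆ Icc 0 1 := by
  refine union_subset (union_subset ?_ hB) ?_ <;> exact Icc_subset_Icc (by norm_num) (by norm_num)

lemma anchors_mem_anchorPad_iff {B : Set ℝ} (hB : B ⊆ Icc 0 1) (v : ℝ) :
    0.1 + v ∈ anchorPad B ∧ 0.9 + v ∈ anchorPad B ↔ |v| ≤ 0.1 := by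
  constructor
  · rintro ⟨h₁, h₉⟩
    have h₁' := (anchorPad_subset_Icc hB h₁).1
    have h₉' := (anchorPad_subset_Icc hB h₉).2
    exact abs_le.2 ⟨by linarith, by linarith⟩
  · intro hv
    obtain ⟨hv₁, hv₂⟩ := abs_le.1 hv
    exact ⟨Or.inl (Or.inl ⟨by linarith, by linarith⟩), Or.inr ⟨by linarith, by linarith⟩⟩

lemma add_mem_anchorPad_iff {B : Set ℝ} {a v : ℝ} (ha : a ∈ Icc 0.45 0.55) (hv : |v| ≤ 0.1) :
    a + v ∈ anchorPad B ↔ a + v ∈ B := by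
  obtain ⟨ha₁, ha₂⟩ := ha
  obtain ⟨hv₁, hv₂⟩ := abs_le.1 hv
  refine ⟨?_, fun h => Or.inl (Or.inr h)⟩
  rintro ((h | h) | h)
  · linarith [h.2]
  · exact h
  · linarith [h.1]

lemma abs_le_of_mem_Icc_of_add_mem_Icc {a v c d : ℝ} (ha : a ∈ Icc c d) (hav : a + v ∈ Icc c d) :
    |v| ≤ d - c := by
  simpa [Real.dist_eq] using Real.dist_le_of_mem_Icc hav ha

lemma image_add_subset_anchorPad_iff {A B : Set ℝ} (hA : A ⊆ Icc 0.45 0.55) {v : ℝ}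
    (hv : |v| ≤ 0.1) : (· + v) '' A ⊆ anchorPad B ↔ (· + v) '' A ⊆ B := by
  simp only [image_subset_iff]
  exact forall₂_congr fun a ha => add_mem_anchorPad_iff (hA ha) hv

theorem anchor_padding_general (A' B' : Set ℝ)
    (hA'ne : A'.Nonempty)
    (hA'sub : A' ⊆ Set.Icc 0.45 0.55) (hB'sub : B' ⊆ Set.Icc 0.45 0.55)
    (v : ℝ) :
    (fun a => a + v) '' ({0.1} ∪ A' ∪ {0.9}) ⊆
      (Set.Icc 0 0.2 ∪ B' ∪ Set.Icc 0.8 1) ↔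
    (fun a => a + v) '' A' ⊆ B' := by
  have hB : B' ⊆ Icc 0 1 := hB'sub.trans (Icc_subset_Icc (by norm_num) (by norm_num))
  change _ ⊆ anchorPad B' ↔ _
  simp only [image_union, image_singleton, union_subset_iff, singleton_subset_iff]
  constructor
  · rintro ⟨⟨h₁, hA⟩, h₉⟩
    have hv := (anchors_mem_anchorPad_iff hB v).1 ⟨h₁, h₉⟩
    exact (image_add_subset_anchorPad_iff hA'sub hv).1 hA
  · intro hA
    obtain ⟨a, ha⟩ := hA'ne
    have hv : |v| ≤ 0.1 :=
      (abs_le_of_mem_Icc_of_add_mem_Icc (hA'sub ha) (hB'sub (hA (mem_image_of_mem _ ha)))).trans_eq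
        (by norm_num)
    obtain ⟨h₁, h₉⟩ := (anchors_mem_anchorPad_iff hB v).2 hv
    exact ⟨⟨h₁, (image_add_subset_anchorPad_iff hA'sub hv).2 hA⟩, h₉⟩

/-- Padding with anchor points and anchor intervals does not change the set of
valid translations. -/
theorem anchor_padding (A' B' : Set ℝ)
    (hA'ne : A'.Nonempty) (hB'ne : B'.Nonempty)
    (hA' : ∃ s : Finset (ℝ × ℝ), A' = ⋃ pq ∈ s, Set.Icc pq.1 pq.2)
    (hB' : ∃ t : Finset (ℝ × ℝ), B' = ⋃ pq ∈ t, Set.Icc pq.1 pq.2)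
    (hA'sub : A' ⊆ Set.Icc 0.45 0.55) (hB'sub : B' ⊆ Set.Icc 0.45 0.55)
    (v : ℝ) :
    (fun a => a + v) '' ({0.1} ∪ A' ∪ {0.9}) ⊆
      (Set.Icc 0 0.2 ∪ B' ∪ Set.Icc 0.8 1) ↔
    (fun a => a + v) '' A' ⊆ B' :=
  anchor_padding_general A' B' hA'ne hA'sub hB'sub v
end

section
/- Let ε > 0, let P be a finite set of points on the x-axis and Q a finite union of closed segments on the x-axis in ℝ², all with x-coordinates in [0,1]. Let ℓ₁, ℓ₂, ℓ₃, ℓ₄ be the horizontal lines y = 1.6ε, y = 0.8ε, y = -0.8ε, y = -1.6ε, and set A = P ∪ ℓ₂ ∪ ℓ₃ and B = Q ∪ ℓ₁ ∪ ℓ₄. If there exists u ∈ ℝ with P + (u,0) ⊆ Q, then inf over translations T ∈ ℝ² of the two-sided Hausdorff distance δ(A + T, B) is at most 0.8ε. -/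
/-!
Translate `A` by `(u, 0)` with `P + u ⊆ Q`. The horizontal lines stay in place, the points of
`P + u` lie in `Q`, every point of `Q` is `0.8ε` from `ℓ₂`, and `ℓ₁`, `ℓ₄` are `0.8ε` from
their neighbours `ℓ₂`, `ℓ₃`. This uses the sup metric of `ℝ × ℝ`, in which `(x, c)` and `(x, c')`
are `|c - c'|` apart.
-/

def horizLine (c : ℝ) : Set (ℝ × ℝ) := {p : ℝ × ℝ | p.2 = c}

open Metric Set

theorem image_add_horizLine (c : ℝ) (T : ℝ × ℝ) :
    (· + T) '' horizLine c = horizLine (c + T.2) := by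
  ext y
  refine ⟨?_, fun hy => ⟨y - T, by simp [horizLine] at hy ⊢; linarith, by simp⟩⟩
  rintro ⟨x, rfl, rfl⟩
  rfl

theorem image_mk_zero_subset_horizLine (S : Set ℝ) :
    (fun x => (x, (0 : ℝ))) '' S ⊆ horizLine 0 := by
  rintro _ ⟨x, -, rfl⟩
  rfl

theorem exists_mem_dist_le_of_mem_horizLine {x : ℝ × ℝ} {c c' a : ℝ} {U : Set (ℝ × ℝ)}
    (hx : x ∈ horizLine c) (hU : horizLine c' ⊆ U) (hc : |c - c'| ≤ a) :
    ∃ y ∈ U, dist x y ≤ a := by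
  refine ⟨(x.1, c'), hU rfl, ?_⟩
  rw [Prod.dist_eq, dist_self, Real.dist_eq, show x.2 = c from hx]
  exact max_le (abs_nonneg _ |>.trans hc) hc

theorem hausdorffDist_axis_union_horizLines_le {S R : Set ℝ} (hSR : S ⊆ R) {a : ℝ} (ha : 0 ≤ a) :
    hausdorffDist ((fun x => (x, (0 : ℝ))) '' S ∪ horizLine a ∪ horizLine (-a))
      ((fun x => (x, (0 : ℝ))) '' R ∪ horizLine (2 * a) ∪ horizLine (-(2 * a))) ≤ a := by
  have middle {U V W : Set (ℝ × ℝ)} : V ⊆ U ∪ V ∪ W := subset_union_left.trans' subset_union_right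
  apply hausdorffDist_le_of_mem_dist ha
  · rintro x ((⟨s, hs, rfl⟩ | hx) | hx)
    · exact ⟨(s, 0), Or.inl (Or.inl ⟨s, hSR hs, rfl⟩), by simpa using ha⟩
    · exact exists_mem_dist_le_of_mem_horizLine hx middle (abs_le.2 ⟨by linarith, by linarith⟩)
    · exact exists_mem_dist_le_of_mem_horizLine hx subset_union_right
        (abs_le.2 ⟨by linarith, by linarith⟩)
  · rintro x ((hx | hx) | hx)
    · exact exists_mem_dist_le_of_mem_horizLine (image_mk_zero_subset_horizLine R hx) middle
        (abs_le.2 ⟨by linarith, by linarith⟩)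
    · exact exists_mem_dist_le_of_mem_horizLine hx middle (abs_le.2 ⟨by linarith, by linarith⟩)
    · exact exists_mem_dist_le_of_mem_horizLine hx subset_union_right
        (abs_le.2 ⟨by linarith, by linarith⟩)

theorem hausdorff_reduction_forward_general (ε : ℝ) (hε : 0 < ε)
    (P : Finset ℝ) (Q : Set ℝ)
    (A B : Set (ℝ × ℝ))
    (hAdef : A = (fun x => (x, (0 : ℝ))) '' ↑P ∪ horizLine (0.8 * ε) ∪
                 horizLine (-0.8 * ε))
    (hBdef : B = (fun x => (x, (0 : ℝ))) '' Q ∪ horizLine (1.6 * ε) ∪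
                 horizLine (-1.6 * ε))
    (h : ∃ u : ℝ, ∀ p ∈ P, p + u ∈ Q) :
    (⨅ T : ℝ × ℝ, Metric.hausdorffDist ((fun x => x + T) '' A) B) ≤ 0.8 * ε := by
  obtain ⟨u, hu⟩ := h
  have hshift : (fun x => x + (u, (0 : ℝ))) '' A = (fun x => (x, (0 : ℝ))) '' ((· + u) '' ↑P) ∪
      horizLine (0.8 * ε) ∪ horizLine (-(0.8 * ε)) := by
    simp only [hAdef, image_union, image_add_horizLine, image_image, Prod.mk_add_mk, add_zero,
      neg_mul]
  have hB : B = (fun x => (x, (0 : ℝ))) '' Q ∪ horizLine (2 * (0.8 * ε)) ∪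
      horizLine (-(2 * (0.8 * ε))) := by
    rw [hBdef]; ring_nf
  refine ciInf_le_of_le ⟨0, forall_mem_range.2 fun _ => hausdorffDist_nonneg⟩ (u, 0) ?_
  rw [hshift, hB]
  exact hausdorffDist_axis_union_horizLines_le (image_subset_iff.2 hu) (by positivity)

/-- Forward direction of the reduction to the two-sided Hausdorff distance:
if some translate of P is contained in Q, the minimum Hausdorff distance
under translation between the augmented sets is at most 0.8ε. -/
theorem hausdorff_reduction_forward (ε : ℝ) (hε : 0 < ε)
    (P : Finset ℝ) (Q : Set ℝ)
    (hQ : ∃ s : Finset (ℝ × ℝ), Q = ⋃ pq ∈ s, Set.Icc pq.1 pq.2)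
    (hP01 : ∀ p ∈ P, p ∈ Set.Icc (0 : ℝ) 1) (hQ01 : Q ⊆ Set.Icc 0 1)
    (A B : Set (ℝ × ℝ))
    (hAdef : A = (fun x => (x, (0 : ℝ))) '' ↑P ∪ horizLine (0.8 * ε) ∪
                 horizLine (-0.8 * ε))
    (hBdef : B = (fun x => (x, (0 : ℝ))) '' Q ∪ horizLine (1.6 * ε) ∪
                 horizLine (-1.6 * ε))
    (h : ∃ u : ℝ, ∀ p ∈ P, p + u ∈ Q) :
    (⨅ T : ℝ × ℝ, Metric.hausdorffDist ((fun x => x + T) '' A) B) ≤ 0.8 * ε :=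
  hausdorff_reduction_forward_general ε hε P Q A B hAdef hBdef h
end

section
/- Let ε > 0 and let P, Q be as above with the additional property that either min over u ∈ ℝ of sup_{p∈P} dist(p + u, Q) equals 0 or it is at least ε (a solution-separation hypothesis). With A = P ∪ ℓ₂ ∪ ℓ₃ and B = Q ∪ ℓ₁ ∪ ℓ₄ (ℓ₁: y = 1.6ε, ℓ₂: y = 0.8ε, ℓ₃: y = -0.8ε, ℓ₄: y = -1.6ε), the following are equivalent: (1) there exists u ∈ ℝ with P + u ⊆ Q; (2) inf over T ∈ ℝ² of the two-sided Hausdorff distance δ(A + T, B) is less than ε. -/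
open Metric Set Filter

section ShiftedDist

variable {E : Type*} [NormedAddCommGroup E]

lemma le_infDist_of_subset_closedBall {s : Set E} {c x : E} {r : ℝ} (hs : s.Nonempty)
    (hsc : s ⊆ closedBall c r) : dist x c - r ≤ infDist x s :=
  (le_infDist hs).2 fun y hy => by
    linarith [dist_triangle x y c, mem_closedBall.1 (hsc hy)]

lemma tendsto_infDist_add_cocompact [ProperSpace E] {s : Set E} (hs : Bornology.IsBounded s)
    (hne : s.Nonempty) (p : E) : Tendsto (fun u => infDist (p + u) s) (cocompact E) atTop := by
  obtain ⟨r, hsc⟩ := hs.subset_closedBall 0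
  have hdist : Tendsto (fun u => dist (p + u) 0 - r) (cocompact E) atTop :=
    tendsto_atTop_add_const_right _ _ <| (tendsto_dist_right_cocompact_atTop 0).comp
      (Homeomorph.addLeft p).isClosedEmbedding.tendsto_cocompact
  exact tendsto_atTop_mono (fun u => le_infDist_of_subset_closedBall hne hsc) hdist

noncomputable def shiftedDist (P : Finset E) (hP : P.Nonempty) (Q : Set E) (u : E) : ℝ :=
  P.sup' hP fun p => infDist (p + u) Q

variable {P : Finset E} (hP : P.Nonempty) {Q : Set E}

lemma infDist_le_shiftedDist {p : E} (hp : p ∈ P) (u : E) :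
    infDist (p + u) Q ≤ shiftedDist P hP Q u :=
  Finset.le_sup' (fun p => infDist (p + u) Q) hp

lemma continuous_shiftedDist : Continuous (shiftedDist P hP Q) :=
  Continuous.finset_sup'_apply hP fun _ _ =>
    (continuous_infDist_pt Q).comp (continuous_const.add continuous_id)

lemma iInf_shiftedDist_le (u : E) : ⨅ v, shiftedDist P hP Q v ≤ shiftedDist P hP Q u :=
  ciInf_le ⟨0, forall_mem_range.2 fun v =>
    infDist_nonneg.trans (infDist_le_shiftedDist hP hP.choose_spec v)⟩ u

lemma exists_add_mem_of_iInf_shiftedDist_eq_zero [ProperSpace E] (hQc : IsClosed Q)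
    (hQb : Bornology.IsBounded Q) (hQne : Q.Nonempty) (h : ⨅ u, shiftedDist P hP Q u = 0) :
    ∃ u, ∀ p ∈ P, p + u ∈ Q := by
  have hcoercive : Tendsto (shiftedDist P hP Q) (cocompact E) atTop :=
    tendsto_atTop_mono (infDist_le_shiftedDist hP hP.choose_spec)
      (tendsto_infDist_add_cocompact hQb hQne hP.choose)
  obtain ⟨u, hu⟩ := (continuous_shiftedDist hP).exists_forall_le hcoercive
  have hzero : shiftedDist P hP Q u ≤ 0 := h ▸ le_ciInf hu
  refine ⟨u, fun p hp => (hQc.mem_iff_infDist_zero hQne).2 ?_⟩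
  exact le_antisymm ((infDist_le_shiftedDist hP hp u).trans hzero) infDist_nonneg

end ShiftedDist

section Strips

def stripSet (S : Set ℝ) (a : ℝ) : Set (ℝ × ℝ) :=
  (fun x => (x, 0)) '' S ∪ horizLine a ∪ horizLine (-a)

variable {S S' : Set ℝ} {a b : ℝ}

lemma mem_stripSet {z : ℝ × ℝ} :
    z ∈ stripSet S a ↔ (z.1 ∈ S ∧ z.2 = 0) ∨ z.2 = a ∨ z.2 = -a := by
  obtain ⟨x, y⟩ := z
  simp [stripSet, horizLine, or_assoc, eq_comm]

lemma mem_translate_stripSet {t s : ℝ} {z : ℝ × ℝ} :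
    z ∈ (· + (t, s)) '' stripSet S a ↔
      (z.1 - t ∈ S ∧ z.2 = s) ∨ z.2 = a + s ∨ z.2 = -a + s := by
  rw [image_add_right, mem_preimage, mem_stripSet]
  simp only [← sub_eq_add_neg, Prod.fst_sub, Prod.snd_sub, sub_eq_iff_eq_add, zero_add]

lemma exists_edist_le_of_vertical {X Y : Set (ℝ × ℝ)} {r : ℝ}
    (h : ∀ z ∈ X, ∃ c, (z.1, c) ∈ Y ∧ |z.2 - c| ≤ r) :
    ∀ z ∈ X, ∃ w ∈ Y, edist z w ≤ ENNReal.ofReal r := fun ⟨_, _⟩ hz =>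
  let ⟨_, hc, hyc⟩ := h _ hz
  ⟨_, hc, by
    rw [edist_dist, Prod.dist_eq, dist_self, Real.dist_eq, max_eq_right (abs_nonneg _)]
    exact ENNReal.ofReal_le_ofReal hyc⟩

lemma hausdorffEDist_le_of_vertical {X Y : Set (ℝ × ℝ)} {r : ℝ}
    (hXY : ∀ z ∈ X, ∃ c, (z.1, c) ∈ Y ∧ |z.2 - c| ≤ r)
    (hYX : ∀ z ∈ Y, ∃ c, (z.1, c) ∈ X ∧ |z.2 - c| ≤ r) :
    hausdorffEDist X Y ≤ ENNReal.ofReal r :=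
  hausdorffEDist_le_of_mem_edist (exists_edist_le_of_vertical hXY)
    (exists_edist_le_of_vertical hYX)

lemma hausdorffEDist_translate_stripSet_ne_top (T : ℝ × ℝ) :
    hausdorffEDist ((· + T) '' stripSet S a) (stripSet S' b) ≠ ⊤ := by
  have hbound : ∀ y c : ℝ, (y = T.2 ∨ y = a + T.2 ∨ y = -a + T.2) →
      (0 = c ∨ b = c ∨ -b = c) → |y - c| ≤ |T.2| + |a| + |b| := by
    rintro y c hy hc
    rw [abs_le]
    constructor <;> rcases hy with rfl | rfl | rfl <;> rcases hc with rfl | rfl | rfl <;>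
      linarith [neg_abs_le T.2, le_abs_self T.2, neg_abs_le a, le_abs_self a, neg_abs_le b,
        le_abs_self b]
  refine ne_top_of_le_ne_top (ENNReal.ofReal_ne_top (r := |T.2| + |a| + |b|))
    (hausdorffEDist_le_of_vertical (fun z hz => ?_) (fun z hz => ?_))
  · refine ⟨b, mem_stripSet.2 (Or.inr (Or.inl rfl)), hbound _ _ ?_ (Or.inr (Or.inl rfl))⟩
    exact mem_translate_stripSet.1 hz |>.imp_left And.right
  · refine ⟨a + T.2, mem_translate_stripSet.2 (Or.inr (Or.inl rfl)), ?_⟩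
    rw [abs_sub_comm]
    refine hbound _ _ (Or.inr (Or.inl rfl)) ?_
    rcases mem_stripSet.1 hz with ⟨-, h⟩ | h | h <;> simp [h]

lemma hausdorffDist_translate_stripSet_le {u : ℝ} (hSS' : ∀ p ∈ S, p + u ∈ S') (ha : 0 ≤ a)
    (hab : a ≤ b) :
    hausdorffDist ((· + (u, 0)) '' stripSet S a) (stripSet S' b) ≤ max a (b - a) := by
  have ha' := le_max_left a (b - a)
  have hba := le_max_right a (b - a)
  refine ENNReal.toReal_le_of_le_ofReal (ha.trans ha')
    (hausdorffEDist_le_of_vertical (fun z hz => ?_) (fun z hz => ?_))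
  · rcases mem_translate_stripSet.1 hz with ⟨hzS, hz2⟩ | hz2 | hz2
    · exact ⟨0, mem_stripSet.2 (Or.inl ⟨by simpa using hSS' _ hzS, rfl⟩), by simp [hz2, ha]⟩
    · refine ⟨b, mem_stripSet.2 (Or.inr (Or.inl rfl)), ?_⟩
      rw [hz2, add_zero, abs_le]
      constructor <;> linarith
    · refine ⟨-b, mem_stripSet.2 (Or.inr (Or.inr rfl)), ?_⟩
      rw [hz2, add_zero, abs_le]
      constructor <;> linarith
  · rcases mem_stripSet.1 hz with ⟨-, hz2⟩ | hz2 | hz2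
    · refine ⟨a, mem_translate_stripSet.2 (Or.inr (Or.inl (add_zero a).symm)), ?_⟩
      rw [hz2, abs_le]
      constructor <;> linarith
    · refine ⟨a, mem_translate_stripSet.2 (Or.inr (Or.inl (add_zero a).symm)), ?_⟩
      rw [hz2, abs_le]
      constructor <;> linarith
    · refine ⟨-a, mem_translate_stripSet.2 (Or.inr (Or.inr (add_zero _).symm)), ?_⟩
      rw [hz2, abs_le]
      constructor <;> linarith

lemma abs_sub_lt_of_dist_lt {z w : ℝ × ℝ} {r : ℝ} (h : dist z w < r) :
    |z.1 - w.1| < r ∧ |z.2 - w.2| < r := by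
  rwa [Prod.dist_eq, Real.dist_eq, Real.dist_eq, max_lt_iff] at h

/-- Far to the right, the copy of `S` is out of reach, so only the two lines of the strip can
approximate a point of `horizLine y`. -/
lemma line_near_of_hausdorffDist_lt (hS : BddAbove S) {r y t s : ℝ} {Y : Set (ℝ × ℝ)}
    (hY : horizLine y ⊆ Y) (h : hausdorffDist ((· + (t, s)) '' stripSet S a) Y < r)
    (hfin : hausdorffEDist ((· + (t, s)) '' stripSet S a) Y ≠ ⊤) :
    |y - (a + s)| < r ∨ |y - (-a + s)| < r := by
  obtain ⟨m, hm⟩ := hS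
  obtain ⟨z, hz, hdist⟩ :=
    exists_dist_lt_of_hausdorffDist_lt' (hY (show (m + t + r, y) ∈ horizLine y from rfl)) h hfin
  obtain ⟨hd1, hd2⟩ := abs_sub_lt_of_dist_lt hdist
  rw [abs_sub_comm] at hd2
  rcases mem_translate_stripSet.1 hz with ⟨hzS, -⟩ | hz2 | hz2
  · have := hm hzS
    linarith [(abs_lt.1 hd1).1]
  · exact Or.inl (hz2 ▸ hd2)
  · exact Or.inr (hz2 ▸ hd2)

variable {ε t s : ℝ}

lemma abs_lt_of_hausdorffDist_translate_stripSet_lt (hS : BddAbove S)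
    (h : hausdorffDist ((· + (t, s)) '' stripSet S (0.8 * ε)) (stripSet S' (1.6 * ε)) < ε) :
    |s| < 0.2 * ε := by
  have hε : 0 < ε := hausdorffDist_nonneg.trans_lt h
  have hup := line_near_of_hausdorffDist_lt hS
    (fun z hz => mem_stripSet.2 (Or.inr (Or.inl hz))) h (hausdorffEDist_translate_stripSet_ne_top _)
  have hdown := line_near_of_hausdorffDist_lt hS
    (fun z hz => mem_stripSet.2 (Or.inr (Or.inr hz))) h (hausdorffEDist_translate_stripSet_ne_top _)
  rw [abs_lt]
  constructor
  · rcases hup with h | h <;> linarith [(abs_lt.1 h).2]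
  · rcases hdown with h | h <;> linarith [(abs_lt.1 h).1]

lemma exists_near_of_hausdorffDist_translate_stripSet_lt (hS : BddAbove S)
    (h : hausdorffDist ((· + (t, s)) '' stripSet S (0.8 * ε)) (stripSet S' (1.6 * ε)) < ε) :
    ∀ p ∈ S, ∃ q ∈ S', |p + t - q| < ε := by
  intro p hp
  obtain ⟨hs₁, hs₂⟩ := abs_lt.1 (abs_lt_of_hausdorffDist_translate_stripSet_lt hS h)
  have hmem : (p + t, s) ∈ (· + (t, s)) '' stripSet S (0.8 * ε) :=
    mem_translate_stripSet.2 (Or.inl ⟨by simpa using hp, rfl⟩)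
  obtain ⟨w, hw, hdist⟩ := exists_dist_lt_of_hausdorffDist_lt hmem h
    (hausdorffEDist_translate_stripSet_ne_top _)
  obtain ⟨hd1, hd2⟩ := abs_sub_lt_of_dist_lt hdist
  dsimp only at hd1 hd2
  rcases mem_stripSet.1 hw with ⟨hwS', -⟩ | hw2 | hw2
  · exact ⟨w.1, hwS', hd1⟩
  · rw [hw2] at hd2
    linarith [(abs_lt.1 hd2).1]
  · rw [hw2] at hd2
    linarith [(abs_lt.1 hd2).2]

end Strips

theorem hausdorff_reduction_correct_general (ε : ℝ) (hε : 0 < ε)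
    (P : Finset ℝ) (hPne : P.Nonempty)
    (Q : Set ℝ)
    (hQ : ∃ s : Finset (ℝ × ℝ), Q = ⋃ pq ∈ s, Set.Icc pq.1 pq.2)
    (hQ01 : Q ⊆ Set.Icc 0 1)
    (hsep : (⨅ u : ℝ, P.sup' hPne fun p => Metric.infDist (p + u) Q) = 0 ∨
            ε ≤ ⨅ u : ℝ, P.sup' hPne fun p => Metric.infDist (p + u) Q)
    (A B : Set (ℝ × ℝ))
    (hAdef : A = (fun x => (x, (0 : ℝ))) '' ↑P ∪ horizLine (0.8 * ε) ∪
                 horizLine (-0.8 * ε))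
    (hBdef : B = (fun x => (x, (0 : ℝ))) '' Q ∪ horizLine (1.6 * ε) ∪
                 horizLine (-1.6 * ε)) :
    (∃ u : ℝ, ∀ p ∈ P, p + u ∈ Q) ↔
    (⨅ T : ℝ × ℝ, Metric.hausdorffDist ((fun x => x + T) '' A) B) < ε := by
  have hQc : IsClosed Q := by
    obtain ⟨s, rfl⟩ := hQ
    exact s.finite_toSet.isClosed_biUnion fun _ _ => isClosed_Icc
  rw [show A = stripSet P (0.8 * ε) by rw [hAdef, stripSet, neg_mul],
    show B = stripSet Q (1.6 * ε) by rw [hBdef, stripSet, neg_mul]]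
  constructor
  · rintro ⟨u, hu⟩
    have hlt : hausdorffDist ((· + (u, 0)) '' stripSet P (0.8 * ε)) (stripSet Q (1.6 * ε)) < ε :=
      (hausdorffDist_translate_stripSet_le hu (by positivity) (by linarith)).trans_lt
        (max_lt (by linarith) (by linarith))
    exact (ciInf_le ⟨0, forall_mem_range.2 fun _ => hausdorffDist_nonneg⟩ (u, 0)).trans_lt hlt
  · intro h
    obtain ⟨⟨t, s⟩, hT⟩ := exists_lt_of_ciInf_lt h
    have hnear := exists_near_of_hausdorffDist_translate_stripSet_lt P.bddAbove hT
    obtain ⟨q, hq, -⟩ := hnear _ hPne.choose_spec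
    refine exists_add_mem_of_iInf_shiftedDist_eq_zero hPne hQc
      ((isBounded_Icc 0 1).subset hQ01) ⟨q, hq⟩ (hsep.resolve_right (not_le.2 ?_))
    calc ⨅ u, shiftedDist P hPne Q u ≤ shiftedDist P hPne Q t := iInf_shiftedDist_le hPne t
      _ < ε := (Finset.sup'_lt_iff hPne).2 fun p hp =>
          let ⟨q, hq, hpq⟩ := hnear p hp
          (infDist_le_dist_of_mem hq).trans_lt hpq

/-- Full correctness of the reduction from SegContPnt to the minimum two-sided
Hausdorff distance under translation, given the solution-separation
hypothesis. -/
theorem hausdorff_reduction_correct (ε : ℝ) (hε : 0 < ε)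
    (P : Finset ℝ) (hPne : P.Nonempty)
    (Q : Set ℝ) (hQne : Q.Nonempty)
    (hQ : ∃ s : Finset (ℝ × ℝ), Q = ⋃ pq ∈ s, Set.Icc pq.1 pq.2)
    (hP01 : ∀ p ∈ P, p ∈ Set.Icc (0 : ℝ) 1) (hQ01 : Q ⊆ Set.Icc 0 1)
    (hsep : (⨅ u : ℝ, P.sup' hPne fun p => Metric.infDist (p + u) Q) = 0 ∨
            ε ≤ ⨅ u : ℝ, P.sup' hPne fun p => Metric.infDist (p + u) Q)
    (A B : Set (ℝ × ℝ))
    (hAdef : A = (fun x => (x, (0 : ℝ))) '' ↑P ∪ horizLine (0.8 * ε) ∪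
                 horizLine (-0.8 * ε))
    (hBdef : B = (fun x => (x, (0 : ℝ))) '' Q ∪ horizLine (1.6 * ε) ∪
                 horizLine (-1.6 * ε)) :
    (∃ u : ℝ, ∀ p ∈ P, p + u ∈ Q) ↔
    (⨅ T : ℝ × ℝ, Metric.hausdorffDist ((fun x => x + T) '' A) B) < ε :=
  hausdorff_reduction_correct_general ε hε P hPne Q hQ hQ01 hsep A B hAdef hBdef
end

section
/- Let Q' = [-100(n-1), -94] ∪ Q ∪ [100, 100(n-1) + 6] where Q ⊆ [0, 3] and n ≥ 2, and let P = {100·i, 100·i + 3 - c_i : 1 ≤ i ≤ n} with each c_i ∈ (0,1). Then neither of the two added intervals alone, nor their union [-100(n-1), -94] ∪ [100, 100(n-1)+6], contains any translate P + v of P. -/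
/-! Look at the points `a k = 100 (k + 1) + v`, `k < n`, of the translate. Their spread
`a (n - 1) - a 0 = 100 (n - 1)` exceeds the length `100 n - 194` of either added interval. Consecutive
points are `100` apart, less than the gap `(-94, 100)` between the two intervals, so if the union
covers them they cannot jump across the gap, and all of them lie in one interval. -/

theorem forall_le_of_sub_lt_gap {α : Type*} [AddCommGroup α] [LinearOrder α]
    [IsOrderedAddMonoid α] {f : ℕ → α} {b c : α} {n : ℕ}
    (hstep : ∀ k, f (k + 1) - f k < c - b) (hgap : ∀ k < n, f k ≤ b ∨ c ≤ f k)
    (h0 : f 0 ≤ b) : ∀ k < n, f k ≤ b := by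
  intro k
  induction k with
  | zero => exact fun _ => h0
  | succ k ih =>
    intro hk
    have hk_le : f k ≤ b := ih (by omega)
    refine (hgap (k + 1) hk).resolve_right fun hc => ?_
    exact (sub_le_sub hc hk_le).not_gt (hstep k)

theorem added_intervals_cannot_cover_general (n : ℕ) (hn : 2 ≤ n)
    (c : Fin n → ℝ)
    (P : Set ℝ)
    (hP : P = (Set.range fun i : Fin n => 100 * ((i : ℝ) + 1)) ∪
              (Set.range fun i : Fin n => 100 * ((i : ℝ) + 1) + 3 - c i))
    (v : ℝ) :
    ¬ ((fun x => x + v) '' P ⊆ Set.Icc (-(100 * ((n : ℝ) - 1))) (-94)) ∧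
    ¬ ((fun x => x + v) '' P ⊆ Set.Icc 100 (100 * ((n : ℝ) - 1) + 6)) ∧
    ¬ ((fun x => x + v) '' P ⊆
        Set.Icc (-(100 * ((n : ℝ) - 1))) (-94) ∪
        Set.Icc 100 (100 * ((n : ℝ) - 1) + 6)) := by
  set a : ℕ → ℝ := fun k => 100 * ((k : ℝ) + 1) + v with ha
  have ha_mem : ∀ k < n, a k ∈ (fun x => x + v) '' P := fun k hk =>
    ⟨_, hP ▸ Or.inl ⟨⟨k, hk⟩, rfl⟩, rfl⟩
  have h0 := ha_mem 0 (by omega)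
  have hlast := ha_mem (n - 1) (by omega)
  have hspan : a (n - 1) - a 0 = 100 * ((n : ℝ) - 1) := by
    simp only [ha, Nat.cast_sub (by omega : 1 ≤ n)]
    ring
  have hn' : (2 : ℝ) ≤ n := by exact_mod_cast hn
  have not_both : ∀ lo hi : ℝ, hi - lo < 100 * ((n : ℝ) - 1) →
      a 0 ∈ Set.Icc lo hi → a (n - 1) ∈ Set.Icc lo hi → False :=
    fun lo hi hlen h0 hlast => by linarith [h0.1, hlast.2]
  have hleft : ¬ _ ⊆ Set.Icc (-(100 * ((n : ℝ) - 1))) (-94) :=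
    fun h => not_both _ _ (by linarith) (h h0) (h hlast)
  have hright : ¬ _ ⊆ Set.Icc 100 (100 * ((n : ℝ) - 1) + 6) :=
    fun h => not_both _ _ (by linarith) (h h0) (h hlast)
  refine ⟨hleft, hright, fun hcover => ?_⟩
  rcases hcover h0 with h0L | h0R
  · have hlast_le : a (n - 1) ≤ -94 :=
      forall_le_of_sub_lt_gap (fun k => by simp only [ha]; push_cast; linarith)
        (fun k hk => (hcover (ha_mem k hk)).imp (·.2) (·.1)) h0L.2 (n - 1) (by omega)
    exact not_both _ _ (by linarith) h0L
      ((hcover hlast).resolve_right fun h => by linarith [h.1])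
  · exact not_both _ _ (by linarith) h0R
      ((hcover hlast).resolve_left fun h => by linarith [h0R.1, h.2])

/-- Neither added interval alone, nor their union, contains any translate
of the point set P from the 3SUM'-to-EqDist reduction. -/
theorem added_intervals_cannot_cover (n : ℕ) (hn : 2 ≤ n)
    (c : Fin n → ℝ) (hc : ∀ i, c i ∈ Set.Ioo (0 : ℝ) 1)
    (Q : Set ℝ) (hQ : Q ⊆ Set.Icc 0 3)
    (P : Set ℝ)
    (hP : P = (Set.range fun i : Fin n => 100 * ((i : ℝ) + 1)) ∪
              (Set.range fun i : Fin n => 100 * ((i : ℝ) + 1) + 3 - c i))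
    (v : ℝ) :
    ¬ ((fun x => x + v) '' P ⊆ Set.Icc (-(100 * ((n : ℝ) - 1))) (-94)) ∧
    ¬ ((fun x => x + v) '' P ⊆ Set.Icc 100 (100 * ((n : ℝ) - 1) + 6)) ∧
    ¬ ((fun x => x + v) '' P ⊆
        Set.Icc (-(100 * ((n : ℝ) - 1))) (-94) ∪
        Set.Icc 100 (100 * ((n : ℝ) - 1) + 6)) :=
  added_intervals_cannot_cover_general n hn c P hP v
end

section
/- With P = {100·i, 100·i + 3 - c_i : 1 ≤ i ≤ n} (c_i ∈ (0,1), n ≥ 2), Q = A ∪ {3 - b : b ∈ B} for finite A, B ⊆ (0,1), and Q' = [-100(n-1), -94] ∪ Q ∪ [100, 100(n-1)+6] (points of Q viewed as degenerate intervals): there exists v ∈ ℝ with P + v ⊆ Q' if and only if there exist a ∈ A, b ∈ B, and an index i with a + b = c_i. -/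
/-!
The points of `P` come in pairs `100 (i + 1)` and `100 (i + 1) + 3 - c i`. An admissible translation
`v` lies in `[-100 n, -94]`, so the first point of some pair lands in the gap `(-94, 6]` between
the two long intervals of `Q'`, hence on `Q ⊆ (0, 3)`. Its partner then lies in `(2, 6)`, which
only `3 - B` meets, and only if the first point lies in `A`: this is `a + b = c i`. Conversely
`v = a - 100 (i + 1)` puts pair `i` onto `a` and `3 - b`, and every other pair, being at distance at
least `100`, into the two long intervals.
-/

open Set

lemma mem_of_mem_Iic_union_union_Ici {α : Type*} [LinearOrder α] {s : Set α} {l u x : α}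
    (h : x ∈ Iic l ∪ s ∪ Ici u) (hx : x ∈ Ioo l u) : x ∈ s := by
  rcases h with (hl | hs) | hu
  · exact absurd hl (not_le.2 hx.1)
  · exact hs
  · exact absurd hu (not_le.2 hx.2)

def reductionP (n : ℕ) (c : Fin n → ℝ) : Set ℝ :=
  (range fun i : Fin n => 100 * ((i : ℝ) + 1)) ∪ (range fun i : Fin n => 100 * ((i : ℝ) + 1) + 3 - c i)

def reductionQ (A B : Finset ℝ) : Set ℝ :=
  ↑A ∪ (fun b => 3 - b) '' ↑B

def reductionQ' (n : ℕ) (A B : Finset ℝ) : Set ℝ :=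
  Icc (-(100 * ((n : ℝ) - 1))) (-94) ∪ reductionQ A B ∪ Icc 100 (100 * ((n : ℝ) - 1) + 6)

section Reduction

variable {n : ℕ} {A B : Finset ℝ} {c : Fin n → ℝ}

lemma mem_Ioo_of_mem_reductionQ (hA : ∀ a ∈ A, a ∈ Ioo (0 : ℝ) 1)
    (hB : ∀ b ∈ B, b ∈ Ioo (0 : ℝ) 1) {q : ℝ} (hq : q ∈ reductionQ A B) : q ∈ Ioo 0 3 := by
  rcases hq with ha | ⟨b, hb, rfl⟩
  · exact ⟨(hA q ha).1, by linarith [(hA q ha).2]⟩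
  · exact ⟨by linarith [(hB b hb).2], by linarith [(hB b hb).1]⟩

lemma reductionQ'_subset_Icc (hn : 0 < n) (hA : ∀ a ∈ A, a ∈ Ioo (0 : ℝ) 1)
    (hB : ∀ b ∈ B, b ∈ Ioo (0 : ℝ) 1) :
    reductionQ' n A B ⊆ Icc (-(100 * ((n : ℝ) - 1))) (100 * ((n : ℝ) - 1) + 6) := by
  have hn₁ : (1 : ℝ) ≤ n := by exact_mod_cast hn
  rintro x ((h | h) | h)
  · exact ⟨h.1, h.2.trans (by linarith)⟩
  · have hx := mem_Ioo_of_mem_reductionQ hA hB h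
    exact ⟨by linarith [hx.1], by linarith [hx.2]⟩
  · exact ⟨by linarith [h.1], h.2⟩

lemma reductionQ'_subset_Iic_union_Ici :
    reductionQ' n A B ⊆ Iic (-94) ∪ reductionQ A B ∪ Ici 100 :=
  union_subset_union (union_subset_union_left _ Icc_subset_Iic_self) Icc_subset_Ici_self

lemma exists_add_eq_of_mem_of_add_sub_mem (hA : ∀ a ∈ A, a ∈ Ioo (0 : ℝ) 1)
    (hB : ∀ b ∈ B, b ∈ Ioo (0 : ℝ) 1) {c x : ℝ} (hc : c ∈ Ioo 0 1) (hx : x ∈ reductionQ A B)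
    (hy : x + 3 - c ∈ Iic (-94) ∪ reductionQ A B ∪ Ici 100) :
    ∃ a ∈ A, ∃ b ∈ B, a + b = c := by
  obtain ⟨hx0, hx3⟩ := mem_Ioo_of_mem_reductionQ hA hB hx
  have hyQ := mem_of_mem_Iic_union_union_Ici hy ⟨by linarith [hc.2], by linarith [hc.1]⟩
  have hy3 := (mem_Ioo_of_mem_reductionQ hA hB hyQ).2
  rcases hx with ha | ⟨b, hb, rfl⟩
  · rcases hyQ with ha' | ⟨b, hb, hyb⟩
    · linarith [(hA _ ha').2, (hA x ha).1, hc.2]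
    · exact ⟨x, ha, b, hb, by simp only at hyb; linarith⟩
  · linarith [(hB b hb).2, hc.2]

lemma exists_fin_mem_Ioc (hn : 0 < n) {v : ℝ}
    (h : ∀ j : Fin n, 100 * ((j : ℝ) + 1) + v ∈
      Icc (-(100 * ((n : ℝ) - 1))) (100 * ((n : ℝ) - 1) + 6)) :
    ∃ j : Fin n, 100 * ((j : ℝ) + 1) + v ∈ Ioc (-94) 6 := by
  have hfirst := (h ⟨0, hn⟩).1
  have hlast := (h ⟨n - 1, by omega⟩).2
  simp only [Nat.cast_zero, Nat.cast_pred hn] at hfirst hlast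
  -- the unique integer `k` with `100 k + v ∈ (-94, 6]`; the two bounds put it in `[1, n]`
  set k := ⌊(6 - v) / 100⌋₊
  have hk₁ : 1 ≤ k := Nat.le_floor <| by rw [le_div_iff₀ (by norm_num)]; push_cast; linarith
  have hkn : k < n + 1 := (Nat.floor_lt (by linarith)).2 <| by
    rw [div_lt_iff₀ (by norm_num)]; push_cast; linarith
  have hk_le := Nat.floor_le (a := (6 - v) / 100) (by linarith)
  have hk_gt := Nat.lt_floor_add_one ((6 - v) / 100)
  refine ⟨⟨k - 1, by omega⟩, ?_⟩
  rw [Nat.cast_pred (by omega), sub_add_cancel]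
  rw [le_div_iff₀ (by norm_num)] at hk_le
  rw [div_lt_iff₀ (by norm_num)] at hk_gt
  constructor <;> linarith

lemma exists_add_eq_of_image_add_subset (hn : 0 < n) (hA : ∀ a ∈ A, a ∈ Ioo (0 : ℝ) 1)
    (hB : ∀ b ∈ B, b ∈ Ioo (0 : ℝ) 1) (hc : ∀ i, c i ∈ Ioo (0 : ℝ) 1) {v : ℝ}
    (hv : (· + v) '' reductionP n c ⊆ reductionQ' n A B) :
    ∃ a ∈ A, ∃ b ∈ B, ∃ i, a + b = c i := by
  have hx (j : Fin n) : 100 * ((j : ℝ) + 1) + v ∈ reductionQ' n A B :=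
    hv ⟨_, Or.inl ⟨j, rfl⟩, rfl⟩
  obtain ⟨j, hj⟩ := exists_fin_mem_Ioc hn fun j => reductionQ'_subset_Icc hn hA hB (hx j)
  have hxQ := mem_of_mem_Iic_union_union_Ici (reductionQ'_subset_Iic_union_Ici (hx j))
    ⟨hj.1, by linarith [hj.2]⟩
  have hy : 100 * ((j : ℝ) + 1) + v + 3 - c j ∈ reductionQ' n A B := by
    convert hv ⟨_, Or.inr ⟨j, rfl⟩, rfl⟩ using 1
    ring
  obtain ⟨a, ha, b, hb, hab⟩ :=
    exists_add_eq_of_mem_of_add_sub_mem hA hB (hc j) hxQ (reductionQ'_subset_Iic_union_Ici hy)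
  exact ⟨a, ha, b, hb, j, hab⟩

lemma mem_Icc_union_Icc_of_ne {i j : ℕ} (hi : i < n) (hj : j < n) (hij : i ≠ j) {a t : ℝ}
    (ha : a ∈ Ioo 0 1) (ht : t ∈ Ico 0 3) :
    100 * ((j : ℝ) - i) + a + t ∈
      Icc (-(100 * ((n : ℝ) - 1))) (-94) ∪ Icc 100 (100 * ((n : ℝ) - 1) + 6) := by
  obtain ⟨ha0, ha1⟩ := ha
  obtain ⟨ht0, ht3⟩ := ht
  have hi' : (i : ℝ) + 1 ≤ n := by exact_mod_cast hi
  have hj' : (j : ℝ) + 1 ≤ n := by exact_mod_cast hj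
  rcases hij.lt_or_gt with h | h
  · have h' : (i : ℝ) + 1 ≤ j := by exact_mod_cast h
    right; constructor <;> nlinarith
  · have h' : (j : ℝ) + 1 ≤ i := by exact_mod_cast h
    left; constructor <;> nlinarith

lemma image_add_subset_of_add_eq (hA : ∀ a ∈ A, a ∈ Ioo (0 : ℝ) 1)
    (hc : ∀ i, c i ∈ Ioo (0 : ℝ) 1) {a b : ℝ} {i : Fin n} (ha : a ∈ A) (hb : b ∈ B)
    (hab : a + b = c i) :
    (· + (a - 100 * ((i : ℝ) + 1))) '' reductionP n c ⊆ reductionQ' n A B := by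
  have hLR : Icc (-(100 * ((n : ℝ) - 1))) (-94) ∪ Icc 100 (100 * ((n : ℝ) - 1) + 6) ⊆
      reductionQ' n A B :=
    union_subset_union_left _ subset_union_left
  have hne {j : Fin n} (hji : j ≠ i) : (i : ℕ) ≠ j := Fin.val_ne_of_ne hji.symm
  rintro _ ⟨_, ⟨j, rfl⟩ | ⟨j, rfl⟩, rfl⟩ <;> obtain rfl | hji := eq_or_ne j i
  · exact Or.inl (Or.inr (Or.inl (by simpa using ha)))
  · convert hLR (mem_Icc_union_Icc_of_ne i.2 j.2 (hne hji) (hA a ha) (t := 0) (by simp)) using 1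
    ring
  · exact Or.inl (Or.inr (Or.inr ⟨b, hb, by simp only; linarith⟩))
  · convert hLR (mem_Icc_union_Icc_of_ne i.2 j.2 (hne hji) (hA a ha) (t := 3 - c j)
      ⟨by linarith [(hc j).2], by linarith [(hc j).1]⟩) using 1
    ring

end Reduction

/-- Full correctness of the reduction from 3SUM' to SegContPnt: some translate
of P is contained in Q' iff the 3SUM' instance has a solution. -/
theorem threeSum'_iff_segContPnt (n : ℕ) (hn : 2 ≤ n) (A B : Finset ℝ)
    (hA : ∀ a ∈ A, a ∈ Set.Ioo (0 : ℝ) 1) (hB : ∀ b ∈ B, b ∈ Set.Ioo (0 : ℝ) 1)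
    (c : Fin n → ℝ) (hc : ∀ i, c i ∈ Set.Ioo (0 : ℝ) 1)
    (P : Set ℝ)
    (hP : P = (Set.range fun i : Fin n => 100 * ((i : ℝ) + 1)) ∪
              (Set.range fun i : Fin n => 100 * ((i : ℝ) + 1) + 3 - c i))
    (Q : Set ℝ) (hQ : Q = ↑A ∪ (fun b => 3 - b) '' ↑B)
    (Q' : Set ℝ)
    (hQ' : Q' = Set.Icc (-(100 * ((n : ℝ) - 1))) (-94) ∪ Q ∪
                Set.Icc 100 (100 * ((n : ℝ) - 1) + 6)) :
    (∃ v : ℝ, (fun x => x + v) '' P ⊆ Q') ↔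
    (∃ a ∈ A, ∃ b ∈ B, ∃ i, a + b = c i) := by
  subst hP hQ hQ'
  exact ⟨fun ⟨_, hv⟩ => exists_add_eq_of_image_add_subset (by omega) hA hB hc hv,
    fun ⟨_, ha, _, hb, _, hab⟩ => ⟨_, image_add_subset_of_add_eq hA hc ha hb hab⟩⟩
end

section
/- Let P be a finite nonempty set of reals and Q a finite nonempty union of closed intervals in ℝ. Then the function g(v) = max_{p∈P} dist(p + v, Q) is continuous, tends to +∞ as |v| → ∞, and attains its minimum at some v* ∈ ℝ; moreover at any minimizer v*, if g(v*) > 0, there exist p₁, p₂ ∈ P and endpoints q₁ of an interval of Q and q₂ of an interval of Q such that g(v*) = (p₁ + v*) - q₁ = q₂ - (p₂ + v*) or g(v*) = q₁ - (p₁ + v*) = (p₂ + v*) - q₂. -/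
/-!
At a minimiser `v` of `g(v) = max_{p ∈ P} dist(p + v, Q)`, translating in either direction
cannot decrease `g`. The non-maximal terms stay below `g v` under a small translation, so for
each direction some maximal term `dist(p + v, Q)` fails to decrease: translating to the right,
its nearest point `q` of `Q` cannot lie to the right of `p + v`, and since `g v > 0` it lies
strictly to the left; symmetrically for the left. A nearest point strictly on one side of `p + v`
is an endpoint of every interval of `Q` containing it, since otherwise the interval would
contain a closer point.
-/

open Filter Topology Metric Set

theorem tendsto_infDist_cocompact_atTop {α : Type*} [PseudoMetricSpace α] [ProperSpace α]
    {s : Set α} (hs : Bornology.IsBounded s) (hne : s.Nonempty) :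
    Tendsto (infDist · s) (cocompact α) atTop := by
  obtain ⟨y, hy⟩ := hne
  refine tendsto_atTop_mono (fun x => ?_)
    (tendsto_atTop_add_const_right _ (-diam s) (tendsto_dist_right_cocompact_atTop y))
  linarith [dist_le_infDist_add_diam (x := x) hs hy]

theorem exists_eq_sup'_frequently_le {ι X : Type*} [TopologicalSpace X] {P : Finset ι}
    (hP : P.Nonempty) {f : ι → X → ℝ} {v : X} (hf : ∀ p ∈ P, ContinuousAt (f p) v)
    (hmin : ∀ w, P.sup' hP (f · v) ≤ P.sup' hP (f · w)) {l : Filter X} [l.NeBot]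
    (hl : l ≤ 𝓝 v) :
    ∃ p ∈ P, f p v = P.sup' hP (f · v) ∧ ∃ᶠ w in l, f p v ≤ f p w := by
  by_contra! hdec
  have hlt : ∀ p ∈ P, ∀ᶠ w in l, f p w < P.sup' hP (f · v) := by
    intro p hp
    rcases (P.le_sup' (f · v) hp).lt_or_eq with hp_lt | hp_eq
    · exact hl ((hf p hp).eventually (gt_mem_nhds hp_lt))
    · simpa only [not_frequently, not_le, hp_eq] using hdec p hp hp_eq
  obtain ⟨w, hw⟩ := ((eventually_all_finset P).2 hlt).exists
  exact (hmin w).not_gt ((Finset.sup'_lt_iff hP).2 hw)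

theorem eventually_nhdsGT_infDist_add_lt {Q : Set ℝ} {p v q : ℝ} (hq : q ∈ Q)
    (hlt : p + v < q) : ∀ᶠ w in 𝓝[>] v, infDist (p + w) Q < dist (p + v) q := by
  filter_upwards [Ioo_mem_nhdsGT (show v < q - p by linarith)] with w hw
  calc infDist (p + w) Q ≤ dist (p + w) q := infDist_le_dist_of_mem hq
    _ < dist (p + v) q := by
      rw [Real.dist_eq, Real.dist_eq, abs_of_neg (by linarith [hw.2]), abs_of_neg (by linarith)]
      linarith [hw.1]

theorem eventually_nhdsLT_infDist_add_lt {Q : Set ℝ} {p v q : ℝ} (hq : q ∈ Q)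
    (hlt : q < p + v) : ∀ᶠ w in 𝓝[<] v, infDist (p + w) Q < dist (p + v) q := by
  filter_upwards [Ioo_mem_nhdsLT (show q - p < v by linarith)] with w hw
  calc infDist (p + w) Q ≤ dist (p + w) q := infDist_le_dist_of_mem hq
    _ < dist (p + v) q := by
      rw [Real.dist_eq, Real.dist_eq, abs_of_pos (by linarith [hw.1]), abs_of_pos (by linarith)]
      linarith [hw.2]

theorem eq_left_of_infDist_eq_dist {Q : Set ℝ} {a b x q : ℝ} (hab : Icc a b ⊆ Q)
    (hq : q ∈ Icc a b) (hxq : x < q) (hnear : infDist x Q = dist x q) : q = a := by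
  by_contra hqa
  have hdist : dist x q = q - x := by rw [dist_comm, Real.dist_eq, abs_of_pos (by linarith)]
  have hcloser := infDist_le_dist_of_mem (x := x)
    (hab ⟨le_max_left a x, max_le (hq.1.trans hq.2) (hxq.le.trans hq.2)⟩)
  rw [hnear, hdist, dist_comm, Real.dist_eq, abs_of_nonneg (by simp)] at hcloser
  have : max a x < q := max_lt (lt_of_le_of_ne hq.1 (Ne.symm hqa)) hxq
  linarith

theorem eq_right_of_infDist_eq_dist {Q : Set ℝ} {a b x q : ℝ} (hab : Icc a b ⊆ Q)
    (hq : q ∈ Icc a b) (hqx : q < x) (hnear : infDist x Q = dist x q) : q = b := by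
  by_contra hqb
  have hdist : dist x q = x - q := by rw [Real.dist_eq, abs_of_pos (by linarith)]
  have hcloser := infDist_le_dist_of_mem (x := x)
    (hab ⟨le_min (hq.1.trans hq.2) (hq.1.trans hqx.le), min_le_left b x⟩)
  rw [hnear, hdist, Real.dist_eq, abs_of_nonneg (by simp)] at hcloser
  have : q < min b x := lt_min (lt_of_le_of_ne hq.2 hqb) hqx
  linarith

theorem exists_endpoint_of_infDist_eq_dist {s : Set (ℝ × ℝ)} {x q : ℝ}
    (hq : q ∈ ⋃ pq ∈ s, Icc pq.1 pq.2) (hxq : x ≠ q)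
    (hnear : infDist x (⋃ pq ∈ s, Icc pq.1 pq.2) = dist x q) :
    ∃ pq ∈ s, q = pq.1 ∨ q = pq.2 := by
  obtain ⟨pq, hpq, hq⟩ := mem_iUnion₂.1 hq
  have hsub : Icc pq.1 pq.2 ⊆ ⋃ pq ∈ s, Icc pq.1 pq.2 :=
    subset_biUnion_of_mem (u := fun pq => Icc pq.1 pq.2) hpq
  rcases hxq.lt_or_gt with hlt | hgt
  · exact ⟨pq, hpq, .inl (eq_left_of_infDist_eq_dist hsub hq hlt hnear)⟩
  · exact ⟨pq, hpq, .inr (eq_right_of_infDist_eq_dist hsub hq hgt hnear)⟩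

theorem continuous_infDist_const_add (Q : Set ℝ) (p : ℝ) :
    Continuous fun v => infDist (p + v) Q :=
  (continuous_infDist_pt Q).comp (continuous_const_add p)

/-- The paper's `g`: the one-sided Hausdorff distance from `P + v` to `Q`. -/
noncomputable def maxInfDistAdd (P : Finset ℝ) (hP : P.Nonempty) (Q : Set ℝ) (v : ℝ) : ℝ :=
  P.sup' hP fun p => infDist (p + v) Q

section maxInfDistAdd

variable {P : Finset ℝ} (hP : P.Nonempty) {Q : Set ℝ}

theorem continuous_maxInfDistAdd : Continuous (maxInfDistAdd P hP Q) :=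
  Continuous.finset_sup'_apply hP fun p _ => continuous_infDist_const_add Q p

theorem tendsto_maxInfDistAdd_cocompact_atTop (hQ : Bornology.IsBounded Q)
    (hQne : Q.Nonempty) :
    Tendsto (maxInfDistAdd P hP Q) (cocompact ℝ) atTop := by
  obtain ⟨p, hp⟩ := id hP
  exact tendsto_atTop_mono (fun v => P.le_sup' (fun p => infDist (p + v) Q) hp)
    ((tendsto_infDist_cocompact_atTop hQ hQne).comp
      (Homeomorph.addLeft p).isClosedEmbedding.tendsto_cocompact)

variable (hQ : IsCompact Q) (hQne : Q.Nonempty) {v : ℝ}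
  (hmin : ∀ w, maxInfDistAdd P hP Q v ≤ maxInfDistAdd P hP Q w)
  (hpos : 0 < maxInfDistAdd P hP Q v)
include hQ hQne hmin hpos

theorem exists_nearest_lt_of_forall_le :
    ∃ p ∈ P, ∃ q ∈ Q, infDist (p + v) Q = dist (p + v) q ∧
      maxInfDistAdd P hP Q v = p + v - q := by
  obtain ⟨p, hp, hmax, hfreq⟩ := exists_eq_sup'_frequently_le hP
    (fun p _ => (continuous_infDist_const_add Q p).continuousAt) hmin
    (nhdsWithin_le_nhds (s := Ioi v))
  obtain ⟨q, hq, hnear⟩ := hQ.exists_infDist_eq_dist hQne (p + v)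
  refine ⟨p, hp, q, hq, hnear, ?_⟩
  have hqlt : q < p + v := by
    rcases lt_trichotomy q (p + v) with hlt | heq | hgt
    · exact hlt
    · rw [maxInfDistAdd, ← hmax, hnear, heq, dist_self] at hpos
      exact absurd hpos (lt_irrefl 0)
    · obtain ⟨w, hle, hlt⟩ :=
        (hfreq.and_eventually (eventually_nhdsGT_infDist_add_lt hq hgt)).exists
      exact absurd hlt (hnear ▸ hle).not_gt
  rw [maxInfDistAdd, ← hmax, hnear, Real.dist_eq, abs_of_pos (sub_pos.2 hqlt)]

theorem exists_nearest_gt_of_forall_le :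
    ∃ p ∈ P, ∃ q ∈ Q, infDist (p + v) Q = dist (p + v) q ∧
      maxInfDistAdd P hP Q v = q - (p + v) := by
  obtain ⟨p, hp, hmax, hfreq⟩ := exists_eq_sup'_frequently_le hP
    (fun p _ => (continuous_infDist_const_add Q p).continuousAt) hmin
    (nhdsWithin_le_nhds (s := Iio v))
  obtain ⟨q, hq, hnear⟩ := hQ.exists_infDist_eq_dist hQne (p + v)
  refine ⟨p, hp, q, hq, hnear, ?_⟩
  have hgt : p + v < q := by
    rcases lt_trichotomy q (p + v) with hlt | heq | hgt
    · obtain ⟨w, hle, hlt⟩ :=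
        (hfreq.and_eventually (eventually_nhdsLT_infDist_add_lt hq hlt)).exists
      exact absurd hlt (hnear ▸ hle).not_gt
    · rw [maxInfDistAdd, ← hmax, hnear, heq, dist_self] at hpos
      exact absurd hpos (lt_irrefl 0)
    · exact hgt
  rw [maxInfDistAdd, ← hmax, hnear, dist_comm, Real.dist_eq, abs_of_pos (sub_pos.2 hgt)]

end maxInfDistAdd

/-- Structural ("interlocking") lemma for the one-sided Hausdorff distance
under translation: g is continuous, tends to ∞, attains its minimum, and at
any positive minimum the maximum distance is realized on both sides by
interval endpoints of Q. -/
theorem interlocking_lemma (P : Finset ℝ) (hPne : P.Nonempty)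
    (s : Finset (ℝ × ℝ)) (Q : Set ℝ)
    (hQdef : Q = ⋃ pq ∈ s, Set.Icc pq.1 pq.2) (hQne : Q.Nonempty)
    (g : ℝ → ℝ)
    (hg : g = fun v => P.sup' hPne fun p => Metric.infDist (p + v) Q) :
    Continuous g ∧
    Filter.Tendsto g (Filter.cocompact ℝ) Filter.atTop ∧
    (∃ v : ℝ, ∀ w : ℝ, g v ≤ g w) ∧
    (∀ v : ℝ, (∀ w : ℝ, g v ≤ g w) → 0 < g v →
      ∃ p₁ ∈ P, ∃ p₂ ∈ P, ∃ q₁ q₂ : ℝ,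
        (∃ pq ∈ s, q₁ = pq.1 ∨ q₁ = pq.2) ∧
        (∃ pq ∈ s, q₂ = pq.1 ∨ q₂ = pq.2) ∧
        ((g v = (p₁ + v) - q₁ ∧ g v = q₂ - (p₂ + v)) ∨
         (g v = q₁ - (p₁ + v) ∧ g v = (p₂ + v) - q₂))) := by
  have hQ : IsCompact Q := hQdef ▸ s.finite_toSet.isCompact_biUnion fun _ _ => isCompact_Icc
  replace hg : g = maxInfDistAdd P hPne Q := hg
  subst hg
  have hcont := continuous_maxInfDistAdd hPne (Q := Q)
  have htend := tendsto_maxInfDistAdd_cocompact_atTop hPne hQ.isBounded hQne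
  refine ⟨hcont, htend, hcont.exists_forall_le htend, fun v hmin hpos => ?_⟩
  obtain ⟨p₁, hp₁, q₁, hq₁, hnear₁, hg₁⟩ :=
    exists_nearest_lt_of_forall_le hPne hQ hQne hmin hpos
  obtain ⟨p₂, hp₂, q₂, hq₂, hnear₂, hg₂⟩ :=
    exists_nearest_gt_of_forall_le hPne hQ hQne hmin hpos
  subst hQdef
  refine ⟨p₁, hp₁, p₂, hp₂, q₁, q₂, ?_, ?_, .inl ⟨hg₁, hg₂⟩⟩
  · exact exists_endpoint_of_infDist_eq_dist hq₁ (by linarith : q₁ < p₁ + v).ne' hnear₁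
  · exact exists_endpoint_of_infDist_eq_dist hq₂ (by linarith : p₂ + v < q₂).ne hnear₂
end
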